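/- Strong necessitation for K4_h: if ⋀_{i=1}^{k} □_{m_i} A_i ⊢_{K4_h} A and m_i ≤ n for all i (and n > r(A)), then ⋀_{i=1}^{k} □_{m_i} A_i ⊢_{K4_h} □n A. -/

import Mathlib

/-- Poly-modal formulas with modalities `□n` for `n : ℕ`. -/
inductive Fm : Type
  | atom : ℕ → Fm
  | bot  : Fm
  | and  : Fm → Fm → Fm
  | or   : Fm → Fm → Fm
  | imp  : Fm → Fm → Fm
  | neg  : Fm → Fm
  | box  : ℕ → Fm → Fm
  deriving DecidableEq

def Fm.top : Fm := Fm.neg Fm.bot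

/-- `i` occurs as a modality index in the formula. -/
def occursBox (i : ℕ) : Fm → Prop
  | .atom _ => False
  | .bot => False
  | .and A B => occursBox i A ∨ occursBox i B
  | .or A B => occursBox i A ∨ occursBox i B
  | .imp A B => occursBox i A ∨ occursBox i B
  | .neg A => occursBox i A
  | .box n A => i = n ∨ occursBox i A

/-- `n` is strictly greater than every modality index occurring in `A`
    (the paper's "`n > r(A)`"). -/
def BoxLt (A : Fm) (n : ℕ) : Prop := ∀ i, occursBox i A → i < n

/-- The language `L∞`: each box index strictly exceeds all box indices in its scope. -/
inductive Linf : Fm → Prop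
  | atom (k : ℕ) : Linf (.atom k)
  | bot : Linf .bot
  | and {A B : Fm} : Linf A → Linf B → Linf (.and A B)
  | or {A B : Fm} : Linf A → Linf B → Linf (.or A B)
  | imp {A B : Fm} : Linf A → Linf B → Linf (.imp A B)
  | neg {A : Fm} : Linf A → Linf (.neg A)
  | box {A : Fm} (n : ℕ) : Linf A → BoxLt A n → Linf (.box n A)

/-- Boolean evaluation treating atoms and boxed formulas as propositional atoms. -/
def evalWith (v : Fm → Bool) : Fm → Bool
  | .atom k => v (.atom k)
  | .bot => false
  | .and A B => evalWith v A && evalWith v B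
  | .or A B => evalWith v A || evalWith v B
  | .imp A B => !(evalWith v A) || evalWith v B
  | .neg A => !(evalWith v A)
  | .box n A => v (.box n A)

/-- Classical propositional tautologies (on `L∞`-formulas as atoms). -/
def Taut (A : Fm) : Prop := ∀ v, evalWith v A = true

def axH (F : Fm) : Prop := ∃ A n, Linf (Fm.box n A) ∧ F = (Fm.box n A).imp (Fm.box (n+1) A)
def axK (F : Fm) : Prop := ∃ A B n, Linf (Fm.box n (A.imp B)) ∧
    F = (Fm.box n (A.imp B)).imp ((Fm.box n A).imp (Fm.box n B))
def axFour (F : Fm) : Prop := ∃ A n, Linf (Fm.box n A) ∧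
    F = (Fm.box n A).imp (Fm.box (n+1) (Fm.box n A))
def axD (F : Fm) : Prop := ∃ n, F = Fm.neg (Fm.box n Fm.bot)
def axT (F : Fm) : Prop := ∃ A n, Linf (Fm.box n A) ∧ F = (Fm.box n A).imp A
def axL (F : Fm) : Prop := ∃ A n, Linf (Fm.box n A) ∧
    F = (Fm.box (n+1) ((Fm.box n A).imp A)).imp (Fm.box n A)
def axFive (F : Fm) : Prop := ∃ A n, Linf (Fm.box n A) ∧
    F = ((Fm.box n A).neg).imp (Fm.box (n+1) ((Fm.box n A).neg))

/-- Hilbert-style provability over `L∞` from a set of axiom (schema instances):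
    classical tautologies, modus ponens, and necessitation restricted to `n > r(A)`. -/
inductive Prv (Ax : Fm → Prop) : Fm → Prop
  | ax {A : Fm} : Ax A → Prv Ax A
  | taut {A : Fm} : Linf A → Taut A → Prv Ax A
  | mp {A B : Fm} : Prv Ax (A.imp B) → Prv Ax A → Prv Ax B
  | nec {A : Fm} (n : ℕ) : Prv Ax A → BoxLt A n → Prv Ax (Fm.box n A)

def K4hAx (F : Fm) : Prop := axH F ∨ axK F ∨ axFour F
def KD4hAx (F : Fm) : Prop := K4hAx F ∨ axD F
def S4hAx (F : Fm) : Prop := K4hAx F ∨ axT F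
def GLhAx (F : Fm) : Prop := K4hAx F ∨ axL F
def KD45hAx (F : Fm) : Prop := KD4hAx F ∨ axFive F

def K4h : Fm → Prop := Prv K4hAx
def KD4h : Fm → Prop := Prv KD4hAx
def S4h : Fm → Prop := Prv S4hAx
def GLh : Fm → Prop := Prv GLhAx

def conjList (l : List Fm) : Fm := l.foldr Fm.and Fm.top
def disjList (l : List Fm) : Fm := l.foldr Fm.or Fm.bot

/-- `Γ ⊢_L A` : some finite conjunction of members of `Γ` implies `A` in `L`. -/
def Deriv (Ax : Fm → Prop) (Γ : Set Fm) (A : Fm) : Prop :=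
  ∃ l : List Fm, (∀ B ∈ l, B ∈ Γ) ∧ Prv Ax ((conjList l).imp A)


/-! Let `⊢ C → A`, where `C = ⋀ᵢ □mᵢ Aᵢ` with `mᵢ ≤ n` and `r(A) < n`. Replacing every subformula
`□k B` with `n ≤ k` by `⊤` maps `K4_h`-theorems to `K4_h`-theorems and fixes `A`, so `⊢ C' → A`,
where `C'` is `C` with its conjuncts `□n Aᵢ` replaced by `⊤`. All boxes of `C'` are below `n`, so
necessitation and `K_h` give `⊢ □n C' → □n A`. Finally `⊢ C → □n C'` conjunct by conjunct:
`□m B → □(m+1) □m B → ⋯ → □n □m B` by `4_h` and `H` when `m < n`, and `□n ⊤` is a theorem. -/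

@[simp] lemma boxLt_bot (n : ℕ) : BoxLt .bot n := fun _ h => h.elim

@[simp] lemma boxLt_and {A B : Fm} {n : ℕ} : BoxLt (.and A B) n ↔ BoxLt A n ∧ BoxLt B n := by
  simp only [BoxLt, occursBox, or_imp, forall_and]

@[simp] lemma boxLt_or {A B : Fm} {n : ℕ} : BoxLt (.or A B) n ↔ BoxLt A n ∧ BoxLt B n := by
  simp only [BoxLt, occursBox, or_imp, forall_and]

@[simp] lemma boxLt_imp {A B : Fm} {n : ℕ} : BoxLt (.imp A B) n ↔ BoxLt A n ∧ BoxLt B n := by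
  simp only [BoxLt, occursBox, or_imp, forall_and]

@[simp] lemma boxLt_neg {A : Fm} {n : ℕ} : BoxLt (.neg A) n ↔ BoxLt A n := Iff.rfl

@[simp] lemma boxLt_box {A : Fm} {m n : ℕ} : BoxLt (.box m A) n ↔ m < n ∧ BoxLt A n := by
  simp only [BoxLt, occursBox, or_imp, forall_and, forall_eq]

@[simp] lemma boxLt_top (n : ℕ) : BoxLt Fm.top n := by simp [Fm.top]

lemma BoxLt.mono {A : Fm} {m n : ℕ} (h : BoxLt A m) (hmn : m ≤ n) : BoxLt A n :=
  fun i hi => (h i hi).trans_le hmn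

lemma linf_top : Linf Fm.top := .neg .bot

lemma linf_imp_iff {A B : Fm} : Linf (A.imp B) ↔ Linf A ∧ Linf B :=
  ⟨fun | .imp hA hB => ⟨hA, hB⟩, fun h => .imp h.1 h.2⟩

lemma linf_box_iff {A : Fm} {n : ℕ} : Linf (.box n A) ↔ Linf A ∧ BoxLt A n :=
  ⟨fun | .box _ hA hlt => ⟨hA, hlt⟩, fun h => .box n h.1 h.2⟩

lemma linf_conjList {l : List Fm} (h : ∀ B ∈ l, Linf B) : Linf (conjList l) := by
  induction l with
  | nil => exact linf_top
  | cons B l ih => exact .and (h B List.mem_cons_self) (ih fun C hC => h C (.tail _ hC))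

namespace Fm

def cut (n : ℕ) : Fm → Fm
  | atom k => atom k
  | bot => bot
  | and A B => and (A.cut n) (B.cut n)
  | or A B => or (A.cut n) (B.cut n)
  | imp A B => imp (A.cut n) (B.cut n)
  | neg A => neg (A.cut n)
  | box k A => if n ≤ k then top else box k (A.cut n)

lemma cut_eq_self {A : Fm} {n : ℕ} (h : BoxLt A n) : A.cut n = A := by
  induction A <;> simp_all [cut, Nat.not_le_of_lt]

lemma occursBox_of_occursBox_cut {A : Fm} {i n : ℕ} (h : occursBox i (A.cut n)) :
    occursBox i A ∧ i < n := by
  induction A with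
  | atom | bot => exact h.elim
  | and A B ihA ihB | or A B ihA ihB | imp A B ihA ihB =>
    rcases h with h | h
    · exact ⟨.inl (ihA h).1, (ihA h).2⟩
    · exact ⟨.inr (ihB h).1, (ihB h).2⟩
  | neg A ih => exact ih h
  | box k A ih =>
    unfold cut at h
    split_ifs at h with hk
    · exact h.elim
    · rcases h with rfl | h
      · exact ⟨.inl rfl, Nat.lt_of_not_le hk⟩
      · exact ⟨.inr (ih h).1, (ih h).2⟩

lemma boxLt_cut (A : Fm) (n : ℕ) : BoxLt (A.cut n) n :=
  fun _ hi => (occursBox_of_occursBox_cut hi).2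

lemma _root_.BoxLt.cut {A : Fm} {k : ℕ} (h : BoxLt A k) (n : ℕ) : BoxLt (A.cut n) k :=
  fun i hi => h i (occursBox_of_occursBox_cut hi).1

lemma _root_.Linf.cut {A : Fm} (h : Linf A) (n : ℕ) : Linf (A.cut n) := by
  induction h with
  | atom k => exact .atom k
  | bot => exact .bot
  | and _ _ ihA ihB => exact .and ihA ihB
  | or _ _ ihA ihB => exact .or ihA ihB
  | imp _ _ ihA ihB => exact .imp ihA ihB
  | neg _ ih => exact .neg ih
  | box k _ hlt ih =>
    unfold Fm.cut
    split_ifs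
    · exact linf_top
    · exact .box k ih (hlt.cut n)

lemma evalWith_cut (v : Fm → Bool) (n : ℕ) (A : Fm) :
    evalWith v (A.cut n) = evalWith (fun F => evalWith v (F.cut n)) A := by
  induction A <;> simp_all [cut, evalWith]

lemma _root_.Taut.cut {A : Fm} (h : Taut A) (n : ℕ) : Taut (A.cut n) :=
  fun v => (evalWith_cut v n A).trans (h _)

end Fm

class LinfAxioms (Ax : Fm → Prop) : Prop where
  linf_of_ax {F : Fm} : Ax F → Linf F

namespace Prv

variable {Ax : Fm → Prop} {A B C A' B' : Fm} {n : ℕ}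

lemma top : Prv Ax Fm.top := .taut linf_top fun _ => rfl

lemma cut (hAx : ∀ F, Ax F → Prv Ax (F.cut n)) (h : Prv Ax A) : Prv Ax (A.cut n) := by
  induction h with
  | ax hF => exact hAx _ hF
  | taut hL hT => exact .taut (hL.cut n) (hT.cut n)
  | mp _ _ ihAB ihA => exact .mp ihAB ihA
  | nec k h hlt _ =>
    unfold Fm.cut
    split_ifs with hk
    · exact top
    · rw [Fm.cut_eq_self (hlt.mono (by omega))]
      exact .nec k h hlt

variable [LinfAxioms Ax]

lemma linf (h : Prv Ax A) : Linf A := by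
  induction h with
  | ax hF => exact LinfAxioms.linf_of_ax hF
  | taut hL _ => exact hL
  | mp _ _ ihAB _ => exact (linf_imp_iff.1 ihAB).2
  | nec n _ hlt ih => exact .box n ih hlt

lemma of_taut_imp (hA : Prv Ax A) (hB : Linf B) (ht : Taut (A.imp B)) : Prv Ax B :=
  .mp (.taut (.imp hA.linf hB) ht) hA

lemma of_taut_imp₂ (hA : Prv Ax A) (hB : Prv Ax B) (hC : Linf C)
    (ht : Taut (A.imp (B.imp C))) : Prv Ax C :=
  .mp (.mp (.taut (.imp hA.linf (.imp hB.linf hC)) ht) hA) hB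

lemma imp_of_linf (hB : Prv Ax B) (hA : Linf A) : Prv Ax (A.imp B) :=
  hB.of_taut_imp (.imp hA hB.linf) fun v => by
    simp only [evalWith]; cases evalWith v A <;> cases evalWith v B <;> rfl

lemma imp_trans (h₁ : Prv Ax (A.imp B)) (h₂ : Prv Ax (B.imp C)) : Prv Ax (A.imp C) :=
  of_taut_imp₂ h₁ h₂ (.imp (linf_imp_iff.1 h₁.linf).1 (linf_imp_iff.1 h₂.linf).2) fun v => by
    simp only [evalWith]
    cases evalWith v A <;> cases evalWith v B <;> cases evalWith v C <;> rfl

lemma and_imp_and (h₁ : Prv Ax (A.imp A')) (h₂ : Prv Ax (B.imp B')) :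
    Prv Ax ((A.and B).imp (A'.and B')) := by
  obtain ⟨hA, hA'⟩ := linf_imp_iff.1 h₁.linf
  obtain ⟨hB, hB'⟩ := linf_imp_iff.1 h₂.linf
  refine of_taut_imp₂ h₁ h₂ (.imp (.and hA hB) (.and hA' hB')) fun v => ?_
  simp only [evalWith]
  cases evalWith v A <;> cases evalWith v A' <;> cases evalWith v B <;> cases evalWith v B' <;> rfl

lemma uncurry (h : Prv Ax (A.imp (B.imp C))) : Prv Ax ((A.and B).imp C) := by
  obtain ⟨hA, hBC⟩ := linf_imp_iff.1 h.linf
  obtain ⟨hB, hC⟩ := linf_imp_iff.1 hBC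
  refine h.of_taut_imp (.imp (.and hA hB) hC) fun v => ?_
  simp only [evalWith]
  cases evalWith v A <;> cases evalWith v B <;> cases evalWith v C <;> rfl

end Prv

lemma taut_imp_conjList {C : Fm} {l : List Fm} (h : ∀ B ∈ l, B = C) :
    Taut (C.imp (conjList l)) := by
  intro v
  induction l with
  | nil => simp [conjList, evalWith, Fm.top]
  | cons B l ih =>
    obtain rfl := h B List.mem_cons_self
    have hl := ih fun D hD => h D (.tail _ hD)
    simp only [conjList, List.foldr, evalWith] at hl ⊢
    cases hB : evalWith v B <;> simp_all

lemma deriv_singleton_iff {Ax : Fm → Prop} [LinfAxioms Ax] {C A : Fm} (hC : Linf C) :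
    Deriv Ax {C} A ↔ Prv Ax (C.imp A) := by
  constructor
  · rintro ⟨l, hl, h⟩
    exact (Prv.taut (.imp hC (linf_imp_iff.1 h.linf).1) (taut_imp_conjList hl)).imp_trans h
  · intro h
    refine ⟨[C], by simp, (Prv.taut (.imp (.and hC linf_top) hC) fun v => ?_).imp_trans h⟩
    simp only [evalWith]
    cases evalWith v C <;> rfl

namespace K4hAx

instance : LinfAxioms K4hAx where
  linf_of_ax := by
    rintro F (⟨A, n, h, rfl⟩ | ⟨A, B, n, h, rfl⟩ | ⟨A, n, h, rfl⟩)
    · obtain ⟨hA, hlt⟩ := linf_box_iff.1 h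
      exact .imp h (.box _ hA (hlt.mono n.le_succ))
    · obtain ⟨hAB, hlt⟩ := linf_box_iff.1 h
      obtain ⟨hA, hB⟩ := linf_imp_iff.1 hAB
      exact .imp h (.imp (.box n hA (boxLt_imp.1 hlt).1) (.box n hB (boxLt_imp.1 hlt).2))
    · obtain ⟨hA, hlt⟩ := linf_box_iff.1 h
      exact .imp h (.box _ h (boxLt_box.2 ⟨n.lt_succ_self, hlt.mono n.le_succ⟩))

lemma prv_cut_imp {A B : Fm} {n : ℕ} (hA : Linf A) (hB : Linf B) (ht : Taut (B.cut n)) :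
    Prv K4hAx ((A.imp B).cut n) :=
  .taut ((hA.imp hB).cut n) fun v => by simp [Fm.cut, evalWith, ht v]

/-- Either all boxes of the instance are below `n` and `cut n` fixes it, or its conclusion
is cut down to a tautology. -/
lemma prv_cut {F : Fm} (hF : K4hAx F) (n : ℕ) : Prv K4hAx (F.cut n) := by
  by_cases hFn : BoxLt F n
  · rw [Fm.cut_eq_self hFn]
    exact .ax hF
  rcases id hF with ⟨A, k, h, rfl⟩ | ⟨A, B, k, h, rfl⟩ | ⟨A, k, h, rfl⟩
  all_goals
    obtain ⟨hPrem, hConcl⟩ := linf_imp_iff.1 (LinfAxioms.linf_of_ax hF)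
    have hlt := (linf_box_iff.1 h).2
    refine prv_cut_imp hPrem hConcl fun v => ?_
  · have hk : n ≤ k + 1 := by
      by_contra hk
      have := hlt.mono (show k ≤ n by omega)
      simp_all
      omega
    simp [Fm.cut, hk, evalWith, Fm.top]
  · have hk : n ≤ k := by
      by_contra hk
      have := hlt.mono (show k ≤ n by omega)
      simp_all
    simp [Fm.cut, hk, evalWith, Fm.top]
  · have hk : n ≤ k + 1 := by
      by_contra hk
      have := hlt.mono (show k ≤ n by omega)
      simp_all
      omega
    simp [Fm.cut, hk, evalWith, Fm.top]

lemma prv_box_imp_box {X Y : Fm} {n : ℕ} (h : Prv K4hAx (X.imp Y)) (hn : BoxLt (X.imp Y) n) :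
    Prv K4hAx ((Fm.box n X).imp (Fm.box n Y)) :=
  .mp (.ax (.inr (.inl ⟨X, Y, n, .box n h.linf hn, rfl⟩))) (.nec n h hn)

lemma prv_box_and_box_imp_box_and {X Y : Fm} {n : ℕ} (hX : Linf (.box n X))
    (hY : Linf (.box n Y)) :
    Prv K4hAx (((Fm.box n X).and (Fm.box n Y)).imp (Fm.box n (X.and Y))) := by
  obtain ⟨hX, hXn⟩ := linf_box_iff.1 hX
  obtain ⟨hY, hYn⟩ := linf_box_iff.1 hY
  have hpair : Prv K4hAx (X.imp (Y.imp (X.and Y))) :=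
    .taut (.imp hX (.imp hY (.and hX hY))) fun v => by
      simp only [evalWith]; cases evalWith v X <;> cases evalWith v Y <;> rfl
  have hK : Prv K4hAx
      ((Fm.box n (Y.imp (X.and Y))).imp ((Fm.box n Y).imp (Fm.box n (X.and Y)))) :=
    .ax (.inr (.inl ⟨Y, X.and Y, n, .box n (.imp hY (.and hX hY)) (by simp [hXn, hYn]), rfl⟩))
  exact ((prv_box_imp_box hpair (by simp [hXn, hYn])).imp_trans hK).uncurry

lemma prv_box_imp_box_box {B : Fm} {m n : ℕ} (h : Linf (.box m B)) (hmn : m < n) :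
    Prv K4hAx ((Fm.box m B).imp (Fm.box n (Fm.box m B))) := by
  induction n, hmn using Nat.le_induction with
  | base => exact .ax (.inr (.inr ⟨B, m, h, rfl⟩))
  | succ n hmn ih =>
    have hn : BoxLt (Fm.box m B) n :=
      boxLt_box.2 ⟨hmn, (linf_box_iff.1 h).2.mono (Nat.le_of_succ_le hmn)⟩
    exact ih.imp_trans (.ax (.inl ⟨_, n, .box n h hn, rfl⟩))

lemma prv_box_imp_box_cut {B : Fm} {m n : ℕ} (h : Linf (.box m B)) (hmn : m ≤ n) :
    Prv K4hAx ((Fm.box m B).imp (Fm.box n ((Fm.box m B).cut n))) := by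
  rcases hmn.lt_or_eq with hmn | rfl
  · rw [Fm.cut_eq_self (boxLt_box.2 ⟨hmn, (linf_box_iff.1 h).2.mono hmn.le⟩)]
    exact prv_box_imp_box_box h hmn
  · simpa [Fm.cut] using (Prv.nec m .top (boxLt_top m)).imp_of_linf h

lemma prv_conjList_imp_box_cut {L : List (ℕ × Fm)} {n : ℕ}
    (hL : ∀ p ∈ L, Linf (Fm.box p.1 p.2)) (hm : ∀ p ∈ L, p.1 ≤ n) :
    Prv K4hAx ((conjList (L.map fun p => Fm.box p.1 p.2)).imp
      (Fm.box n ((conjList (L.map fun p => Fm.box p.1 p.2)).cut n))) := by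
  induction L with
  | nil => exact (Prv.nec n .top (boxLt_top n)).imp_of_linf linf_top
  | cons p L ih =>
    have hhead := prv_box_imp_box_cut (hL p List.mem_cons_self) (hm p List.mem_cons_self)
    have htail := ih (fun q hq => hL q (.tail _ hq)) (fun q hq => hm q (.tail _ hq))
    exact (hhead.and_imp_and htail).imp_trans
      (prv_box_and_box_imp_box_and (linf_imp_iff.1 hhead.linf).2 (linf_imp_iff.1 htail.linf).2)

end K4hAx

theorem K4h_strong_necessitation_general (L : List (ℕ × Fm)) (n : ℕ) (A : Fm)
    (hL : ∀ p ∈ L, Linf (Fm.box p.1 p.2))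
    (hm : ∀ p ∈ L, p.1 ≤ n)
    (hn : BoxLt A n)
    (h : Deriv K4hAx {conjList (L.map fun p => Fm.box p.1 p.2)} A) :
    Deriv K4hAx {conjList (L.map fun p => Fm.box p.1 p.2)} (Fm.box n A) := by
  set C := conjList (L.map fun p => Fm.box p.1 p.2)
  have hC : Linf C := linf_conjList fun _ hB => by
    obtain ⟨p, hp, rfl⟩ := List.mem_map.1 hB
    exact hL p hp
  have hCA : Prv K4hAx (C.imp A) := (deriv_singleton_iff hC).1 h
  have hcut : Prv K4hAx ((C.cut n).imp A) := by
    simpa [Fm.cut, Fm.cut_eq_self hn] using hCA.cut fun _ hF => hF.prv_cut n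
  have hbox : Prv K4hAx ((Fm.box n (C.cut n)).imp (Fm.box n A)) :=
    K4hAx.prv_box_imp_box hcut (boxLt_imp.2 ⟨C.boxLt_cut n, hn⟩)
  exact (deriv_singleton_iff hC).2 ((K4hAx.prv_conjList_imp_box_cut hL hm).imp_trans hbox)

/-- strong necessitation for `K4_h`. -/
theorem K4h_strong_necessitation (L : List (ℕ × Fm)) (n : ℕ) (A : Fm)
    (hL : ∀ p ∈ L, Linf (Fm.box p.1 p.2))
    (hm : ∀ p ∈ L, p.1 ≤ n)
    (hA : Linf A) (hn : BoxLt A n)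
    (h : Deriv K4hAx {conjList (L.map fun p => Fm.box p.1 p.2)} A) :
    Deriv K4hAx {conjList (L.map fun p => Fm.box p.1 p.2)} (Fm.box n A) :=
  K4h_strong_necessitation_general L n A hL hm hn h
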